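/- Let 𝕆 be the real octonion division algebra with standard generators i, j, ℓ, and let B = [[i, 1],[ij, j]] ∈ M₂(𝕆). Then 0 is a left eigenvalue of B: the nonzero vector w = (−ℓ, iℓ)ᵀ satisfies Bw = 0, since i(−ℓ) + 1·(iℓ) = 0 and (ij)(−ℓ) + j(iℓ) = 0. -/

import Mathlib

/-- Cayley–Dickson double (with γ = -1) of an algebra with involution. -/
def CD (A : Type*) : Type _ := A × A

namespace CD

variable {A : Type*}

instance [AddCommGroup A] : AddCommGroup (CD A) := inferInstanceAs (AddCommGroup (A × A))
noncomputable instance [AddCommGroup A] [Module ℝ A] : Module ℝ (CD A) :=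
  inferInstanceAs (Module ℝ (A × A))

/-- Build an element of the double from its two halves. -/
def mk (a b : A) : CD A := (a, b)

section
set_option linter.unusedSectionVars false

/-- A star operation fixing `1`. -/
class StarOne (A : Type*) [One A] [Star A] : Prop where
  star_one : star (1 : A) = 1

variable [NonAssocRing A] [StarAddMonoid A] [StarOne A]

instance : One (CD A) := ⟨((1 : A), 0)⟩
instance : Mul (CD A) :=
  ⟨fun x y => (x.1 * y.1 - star y.2 * x.2, y.2 * x.1 + x.2 * star y.1)⟩
instance : Star (CD A) := ⟨fun x => (star x.1, -x.2)⟩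

lemma mul_def (x y : CD A) :
    x * y = (x.1 * y.1 - star y.2 * x.2, y.2 * x.1 + x.2 * star y.1) := rfl
lemma one_def : (1 : CD A) = ((1 : A), 0) := rfl
lemma star_def (x : CD A) : star x = (star x.1, -x.2) := rfl
lemma add_def (x y : CD A) : x + y = (x.1 + y.1, x.2 + y.2) := rfl
lemma zero_def : (0 : CD A) = ((0 : A), 0) := rfl

instance instNonAssocRing : NonAssocRing (CD A) where
  __ := (inferInstance : AddCommGroup (CD A))
  left_distrib a b c := by
    refine Prod.ext ?_ ?_
    · show a.1 * (b.1 + c.1) - star (b.2 + c.2) * a.2 =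
        (a.1 * b.1 - star b.2 * a.2) + (a.1 * c.1 - star c.2 * a.2)
      simp [mul_add, add_mul, star_add]; abel
    · show (b.2 + c.2) * a.1 + a.2 * star (b.1 + c.1) =
        (b.2 * a.1 + a.2 * star b.1) + (c.2 * a.1 + a.2 * star c.1)
      simp [mul_add, add_mul, star_add]; abel
  right_distrib a b c := by
    refine Prod.ext ?_ ?_
    · show (a.1 + b.1) * c.1 - star c.2 * (a.2 + b.2) =
        (a.1 * c.1 - star c.2 * a.2) + (b.1 * c.1 - star c.2 * b.2)
      simp [mul_add, add_mul, star_add]; abel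
    · show c.2 * (a.1 + b.1) + (a.2 + b.2) * star c.1 =
        (c.2 * a.1 + a.2 * star c.1) + (c.2 * b.1 + b.2 * star c.1)
      simp [mul_add, add_mul, star_add]; abel
  zero_mul a := by
    refine Prod.ext ?_ ?_
    · show (0 : A) * a.1 - star a.2 * 0 = 0
      simp
    · show a.2 * (0 : A) + 0 * star a.1 = 0
      simp
  mul_zero a := by
    refine Prod.ext ?_ ?_
    · show a.1 * (0 : A) - star (0 : A) * a.2 = 0
      simp
    · show (0 : A) * a.1 + a.2 * star (0 : A) = 0
      simp
  one_mul a := by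
    refine Prod.ext ?_ ?_
    · show (1 : A) * a.1 - star a.2 * 0 = a.1
      simp
    · show a.2 * (1 : A) + 0 * star a.1 = a.2
      simp
  mul_one a := by
    refine Prod.ext ?_ ?_
    · show a.1 * (1 : A) - star (0 : A) * a.2 = a.1
      simp
    · show (0 : A) * a.1 + a.2 * star (1 : A) = a.2
      simp [StarOne.star_one]

instance instStarAddMonoid : StarAddMonoid (CD A) where
  star_involutive x := by
    refine Prod.ext ?_ ?_
    · show star (star x.1) = x.1
      simp
    · show - - x.2 = x.2
      simp
  star_add x y := by
    refine Prod.ext ?_ ?_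
    · show star (x.1 + y.1) = star x.1 + star y.1
      simp
    · show -(x.2 + y.2) = -x.2 + -y.2
      simp [add_comm]

instance instStarOne : StarOne (CD A) :=
  ⟨Prod.ext (StarOne.star_one) (by show -(0 : A) = 0; simp)⟩

end

end CD

instance : CD.StarOne ℝ := ⟨by simp⟩

/-- The real octonions, as a three-fold Cayley–Dickson double of ℝ. -/
def Octonion : Type := CD (CD (CD ℝ))

instance : NonAssocRing Octonion := inferInstanceAs (NonAssocRing (CD (CD (CD ℝ))))
instance : StarAddMonoid Octonion := inferInstanceAs (StarAddMonoid (CD (CD (CD ℝ))))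
instance : CD.StarOne Octonion := inferInstanceAs (CD.StarOne (CD (CD (CD ℝ))))
noncomputable instance : Module ℝ Octonion := inferInstanceAs (Module ℝ (CD (CD (CD ℝ))))

/-- The real sedenions, as the Cayley–Dickson double of the octonions. -/
def Sedenion : Type := CD Octonion

instance : NonAssocRing Sedenion := inferInstanceAs (NonAssocRing (CD Octonion))
instance : StarAddMonoid Sedenion := inferInstanceAs (StarAddMonoid (CD Octonion))
instance : CD.StarOne Sedenion := inferInstanceAs (CD.StarOne (CD Octonion))
noncomputable instance : Module ℝ Sedenion := inferInstanceAs (Module ℝ (CD Octonion))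

/-- Assemble a complex number, quaternion, octonion, sedenion from real coordinates. -/
def mkC (f : ℕ → ℝ) (k : ℕ) : CD ℝ := CD.mk (f k) (f (k+1))
def mkH (f : ℕ → ℝ) (k : ℕ) : CD (CD ℝ) := CD.mk (mkC f k) (mkC f (k+2))
def mkO (f : ℕ → ℝ) (k : ℕ) : Octonion := CD.mk (mkH f k) (mkH f (k+4))
def mkS (f : ℕ → ℝ) : Sedenion := CD.mk (mkO f 0) (mkO f 8)

/-- The standard basis `e₀, …, e₁₅` of the sedenions. -/
def sE (n : ℕ) : Sedenion := mkS (fun k => if k = n then 1 else 0)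

/-- The standard basis `e₀, …, e₇` of the octonions. -/
def oE (n : ℕ) : Octonion := mkO (fun k => if k = n then 1 else 0) 0

/-- Powers in a (power-associative) non-associative algebra. -/
def cdpow {A : Type*} [One A] [Mul A] (x : A) : ℕ → A
  | 0 => 1
  | n+1 => cdpow x n * x

/-! The first row of `B w` vanishes by distributivity alone. The second needs `(ij)ℓ = j(iℓ)`,
which holds in every Cayley–Dickson double `CD A` for `a, b ∈ A` and `ℓ = (0, 1)`: both sides
equal `(0, ab)`. Since `i, j` lie in the quaternion half of `𝕆 = CD ℍ` and `ℓ = (0, 1)`, this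
applies. -/

namespace CD

theorem mk_ne_zero_of_snd_ne_zero {A : Type*} [AddCommGroup A] {a b : A} (hb : b ≠ 0) :
    mk a b ≠ 0 :=
  fun h => hb (congrArg Prod.snd h)

variable {A : Type*} [NonAssocRing A] [StarAddMonoid A]

instance [StarOne A] [Nontrivial A] : Nontrivial (CD A) :=
  ⟨⟨1, 0, fun h => one_ne_zero (congrArg Prod.fst h)⟩⟩

theorem mk_mul_mk (a b c d : A) :
    mk a b * mk c d = mk (a * c - star d * b) (d * a + b * star c) := rfl

theorem mk_mul_mk_mul_mk_zero_one [StarOne A] (a b : A) :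
    (mk a 0 * mk b 0) * mk 0 1 = mk b 0 * (mk a 0 * mk 0 1) := by
  simp only [mk_mul_mk, star_zero, StarOne.star_one, zero_mul, mul_zero, sub_zero, add_zero,
    one_mul]

end CD

theorem oE_four : oE 4 = CD.mk 0 1 := rfl

theorem oE_of_lt_four {n : ℕ} (hn : n < 4) :
    oE n = CD.mk (mkH (fun k => if k = n then 1 else 0) 0) 0 := by
  interval_cases n <;> rfl

theorem oE_one_mul_oE_two_mul_oE_four : (oE 1 * oE 2) * oE 4 = oE 2 * (oE 1 * oE 4) := by
  rw [oE_of_lt_four (by norm_num : 1 < 4), oE_of_lt_four (by norm_num : 2 < 4), oE_four]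
  exact CD.mk_mul_mk_mul_mk_zero_one _ _

/-- In the real octonions with standard generators `i = e₁`, `j = e₂`,
`ℓ = e₄`, the matrix `B = [[i, 1],[ij, j]]` has `0` as a left eigenvalue: the nonzero
vector `w = (-ℓ, iℓ)ᵀ` satisfies `Bw = 0`, since `i(-ℓ) + 1·(iℓ) = 0` and
`(ij)(-ℓ) + j(iℓ) = 0`. -/
theorem stmt18 :
    (![-(oE 4), oE 1 * oE 4] : Fin 2 → Octonion) ≠ 0 ∧
    oE 1 * (-(oE 4)) + 1 * (oE 1 * oE 4) = 0 ∧
    (oE 1 * oE 2) * (-(oE 4)) + oE 2 * (oE 1 * oE 4) = 0 ∧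
    Matrix.mulVec !![oE 1, 1; oE 1 * oE 2, oE 2] ![-(oE 4), oE 1 * oE 4] = 0 := by
  have row_i : oE 1 * (-(oE 4)) + 1 * (oE 1 * oE 4) = 0 := by
    rw [mul_neg, one_mul, neg_add_cancel]
  have row_j : (oE 1 * oE 2) * (-(oE 4)) + oE 2 * (oE 1 * oE 4) = 0 := by
    rw [mul_neg, oE_one_mul_oE_two_mul_oE_four, neg_add_cancel]
  have hℓ : oE 4 ≠ 0 := oE_four ▸ CD.mk_ne_zero_of_snd_ne_zero one_ne_zero
  refine ⟨fun h => neg_ne_zero.mpr hℓ (congrFun h 0), row_i, row_j, ?_⟩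
  ext k
  fin_cases k <;> simp [oE_one_mul_oE_two_mul_oE_four]
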